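/- For every i in {1,...,n} and every homogeneous element f of R, the element y_i f - (-1)^{|x_i||f|} f y_i - {x_i, f} of F(R) lies in the ideal J. -/
import Mathlib


noncomputable section

open scoped DirectSum

/-- The sign `(-1)^m`, as an integer, for `m : ℤ`. -/
def sgn (m : ℤ) : ℤ := (Int.negOnePow m : ℤ)

/-- A differential graded Poisson algebra structure on a `ℤ`-graded `k`-algebra `A`,
whose grading is given by `𝒜`. -/
structure DGPoissonAlgebra (k : Type) [Field k] (A : Type) [Ring A] [Algebra k A]
    (𝒜 : ℤ → Submodule k A) : Type where
  /-- the Poisson bracket -/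
  br : A →ₗ[k] A →ₗ[k] A
  /-- the differential -/
  d : A →ₗ[k] A
  br_mem : ∀ ⦃i j : ℤ⦄ ⦃a b : A⦄, a ∈ 𝒜 i → b ∈ 𝒜 j → br a b ∈ 𝒜 (i + j)
  d_mem : ∀ ⦃i : ℤ⦄ ⦃a : A⦄, a ∈ 𝒜 i → d a ∈ 𝒜 (i + 1)
  antisymm : ∀ ⦃i j : ℤ⦄ ⦃a b : A⦄, a ∈ 𝒜 i → b ∈ 𝒜 j →
    br a b = -(sgn (i * j) • br b a)
  jacobi : ∀ ⦃i j l : ℤ⦄ ⦃a b c : A⦄, a ∈ 𝒜 i → b ∈ 𝒜 j → c ∈ 𝒜 l →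
    br a (br b c) = br (br a b) c + sgn (i * j) • br b (br a c)
  gcomm : ∀ ⦃i j : ℤ⦄ ⦃a b : A⦄, a ∈ 𝒜 i → b ∈ 𝒜 j → a * b = sgn (i * j) • (b * a)
  leibniz : ∀ ⦃i j l : ℤ⦄ ⦃a b c : A⦄, a ∈ 𝒜 i → b ∈ 𝒜 j → c ∈ 𝒜 l →
    br a (b * c) = br a b * c + sgn (i * j) • (b * br a c)
  d_sq : ∀ a : A, d (d a) = 0
  d_br : ∀ ⦃i j : ℤ⦄ ⦃a b : A⦄, a ∈ 𝒜 i → b ∈ 𝒜 j →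
    d (br a b) = br (d a) b + sgn i • br a (d b)
  d_mul : ∀ ⦃i j : ℤ⦄ ⦃a b : A⦄, a ∈ 𝒜 i → b ∈ 𝒜 j →
    d (a * b) = d a * b + sgn i • (a * d b)

/-- A differential graded algebra structure (i.e. a differential) on a `ℤ`-graded
`k`-algebra `B` with grading `ℬ`. -/
structure DGAlgebra (k : Type) [Field k] (B : Type) [Ring B] [Algebra k B]
    (ℬ : ℤ → Submodule k B) : Type where
  /-- the differential -/
  d : B →ₗ[k] B
  d_mem : ∀ ⦃i : ℤ⦄ ⦃b : B⦄, b ∈ ℬ i → d b ∈ ℬ (i + 1)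
  d_sq : ∀ b : B, d (d b) = 0
  d_mul : ∀ ⦃i j : ℤ⦄ ⦃a b : B⦄, a ∈ ℬ i → b ∈ ℬ j →
    d (a * b) = d a * b + sgn i • (a * d b)

/-- `f` is a DG algebra map: a degree-`0` algebra map commuting with the differentials. -/
structure IsDGAlgebraMap (k : Type) [Field k] {A B : Type} [Ring A] [Algebra k A]
    [Ring B] [Algebra k B] (𝒜 : ℤ → Submodule k A) (ℬ : ℤ → Submodule k B)
    (dA : A →ₗ[k] A) (dB : B →ₗ[k] B) (f : A →ₐ[k] B) : Prop where
  map_mem : ∀ ⦃i : ℤ⦄ ⦃a : A⦄, a ∈ 𝒜 i → f a ∈ ℬ i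
  map_d : ∀ a : A, f (dA a) = dB (f a)

/-- The compatibility conditions satisfied by a pair `(f, g)` from a DG Poisson algebra
`A` to a DG algebra `B`: `f` is a DG algebra map, `g` is a degree-`0` `k`-linear map
commuting with the differentials which is a graded Lie algebra map into `B` with the
graded commutator, and the two mixed identities hold. -/
def UEACompat (k : Type) [Field k] {A B : Type} [Ring A] [Algebra k A]
    [Ring B] [Algebra k B] (𝒜 : ℤ → Submodule k A) (ℬ : ℤ → Submodule k B)
    (P : DGPoissonAlgebra k A 𝒜) (dB : B →ₗ[k] B)
    (f : A →ₐ[k] B) (g : A →ₗ[k] B) : Prop :=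
  IsDGAlgebraMap k 𝒜 ℬ P.d dB f ∧
  (∀ ⦃i : ℤ⦄ ⦃a : A⦄, a ∈ 𝒜 i → g a ∈ ℬ i) ∧
  (∀ a : A, g (P.d a) = dB (g a)) ∧
  (∀ ⦃i j : ℤ⦄ ⦃a b : A⦄, a ∈ 𝒜 i → b ∈ 𝒜 j →
    g (P.br a b) = g a * g b - sgn (i * j) • (g b * g a)) ∧
  (∀ ⦃i j : ℤ⦄ ⦃a b : A⦄, a ∈ 𝒜 i → b ∈ 𝒜 j →
    f (P.br a b) = g a * f b - sgn (i * j) • (f b * g a)) ∧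
  (∀ ⦃i j : ℤ⦄ ⦃a b : A⦄, a ∈ 𝒜 i → b ∈ 𝒜 j →
    g (a * b) = f a * g b + sgn (i * j) • (f b * g a))

/-- `(E, α, β)` is a universal enveloping algebra of the DG Poisson algebra `A`. -/
def IsUEA (k : Type) [Field k] {A E : Type} [Ring A] [Algebra k A] [Ring E] [Algebra k E]
    (𝒜 : ℤ → Submodule k A) (ℰ : ℤ → Submodule k E)
    (P : DGPoissonAlgebra k A 𝒜) (DE : DGAlgebra k E ℰ)
    (α : A →ₐ[k] E) (β : A →ₗ[k] E) : Prop :=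
  UEACompat k 𝒜 ℰ P DE.d α β ∧
  ∀ (D : Type) [Ring D] [Algebra k D] (𝒟 : ℤ → Submodule k D) [GradedAlgebra 𝒟]
    (dD : DGAlgebra k D 𝒟) (f : A →ₐ[k] D) (g : A →ₗ[k] D),
    UEACompat k 𝒜 𝒟 P dD.d f g →
    ∃! φ : E →ₐ[k] D, IsDGAlgebraMap k ℰ 𝒟 DE.d dD.d φ ∧
      φ.comp α = f ∧ φ.toLinearMap.comp β = g

/-- The two-sided ideal of `F` generated by a set `S`, as a `k`-submodule. -/
def idealGen (k : Type) [Field k] {F : Type} [Ring F] [Algebra k F] (S : Set F) :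
    Submodule k F :=
  Submodule.span k {z : F | ∃ u v : F, ∃ s ∈ S, z = u * s * v}

/-- The left ideal of `F` generated by a set `S`, as a `k`-submodule. -/
def leftIdealGen (k : Type) [Field k] {F : Type} [Ring F] [Algebra k F] (S : Set F) :
    Submodule k F :=
  Submodule.span k {z : F | ∃ u : F, ∃ s ∈ S, z = u * s}

/-- A submodule is graded if it is spanned by its homogeneous elements. -/
def IsGradedSubmodule (k : Type) [Field k] {A : Type} [AddCommGroup A] [Module k A]
    (𝒜 : ℤ → Submodule k A) (M : Submodule k A) : Prop :=
  M ≤ Submodule.span k {a : A | a ∈ M ∧ ∃ i, a ∈ 𝒜 i}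

/-- A `k`-submodule which is a two-sided ideal. -/
def IsTwoSidedIdealSub (k : Type) [Field k] {A : Type} [Ring A] [Algebra k A]
    (M : Submodule k A) : Prop :=
  ∀ r : A, ∀ m ∈ M, r * m ∈ M ∧ m * r ∈ M

/-- A DG ideal: a graded two-sided ideal closed under the differential `d`. -/
def IsDGIdeal (k : Type) [Field k] {A : Type} [Ring A] [Algebra k A]
    (𝒜 : ℤ → Submodule k A) (d : A →ₗ[k] A) (M : Submodule k A) : Prop :=
  IsTwoSidedIdealSub k M ∧ IsGradedSubmodule k 𝒜 M ∧ ∀ m ∈ M, d m ∈ M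

/-- A DG Poisson ideal: a DG ideal which is also closed under the Poisson bracket. -/
def IsDGPoissonIdeal (k : Type) [Field k] {A : Type} [Ring A] [Algebra k A]
    (𝒜 : ℤ → Submodule k A) (P : DGPoissonAlgebra k A 𝒜) (M : Submodule k A) : Prop :=
  IsDGIdeal k 𝒜 P.d M ∧ ∀ a : A, ∀ m ∈ M, P.br a m ∈ M

/-- `π : A → B` presents `B` as the quotient of `A` by `I`. -/
structure IsQuotientBy (k : Type) [Field k] {A B : Type} [Ring A] [Algebra k A]
    [Ring B] [Algebra k B] (π : A →ₐ[k] B) (I : Submodule k A) : Prop where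
  surj : Function.Surjective π
  ker : ∀ a : A, π a = 0 ↔ a ∈ I

/-- The (noncommutative, ordered) monomial `x 0 ^ e 0 * x 1 ^ e 1 * ⋯` . -/
def xMono {n : ℕ} {R : Type} [Ring R] (x : Fin n → R) (e : Fin n → ℕ) : R :=
  ((List.finRange n).map fun r => x r ^ e r).prod
/-- The map `ψ : R → F(R)`, `ψ(f) = ∑_α ψ_α(f) y_α`. -/
def psiF {k R F : Type} [Field k] [Ring R] [Algebra k R] [Ring F] [Algebra k F]
    {Λ : Type} (ι : R →ₐ[k] F) (ψ : Λ → R →ₗ[k] R) (y : Λ → F) (f : R) : F :=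
  ∑ᶠ α : Λ, ι (ψ α f) * y α

/-- The generators of the graded ideal `J` of `F(R)`: `I`, `ψ(I)`,
`y_i y_j - (-1)^{|x_i||x_j|} y_j y_i - ψ({x_i, x_j})` and
`y_i x_j - (-1)^{|x_i||x_j|} x_j y_i - {x_i, x_j}`. -/
def Jgens {k R F : Type} [Field k] [Ring R] [Algebra k R] [Ring F] [Algebra k F]
    {Λ : Type} (𝒜 : ℤ → Submodule k R) (P : DGPoissonAlgebra k R 𝒜)
    (x : Λ → R) (w : Λ → ℤ) (ι : R →ₐ[k] F) (ψ : Λ → R →ₗ[k] R) (y : Λ → F)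
    (I : Submodule k R) : Set F :=
  (⇑ι '' (I : Set R)) ∪ (psiF ι ψ y '' (I : Set R)) ∪
  {z | ∃ α β, z = y α * y β - sgn (w α * w β) • (y β * y α)
      - psiF ι ψ y (P.br (x α) (x β))} ∪
  {z | ∃ α β, z = y α * ι (x β) - sgn (w α * w β) • (ι (x β) * y α)
      - ι (P.br (x α) (x β))}


section Aux

variable {k : Type} [Field k] {F : Type} [Ring F] [Algebra k F]

theorem sgn_zero : sgn 0 = 1 := by simp [sgn]

theorem sgn_add (a b : ℤ) : sgn (a + b) = sgn a * sgn b := by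
  simp [sgn, Int.negOnePow_add]

theorem mem_idealGen_of_mem {S : Set F} {s : F} (hs : s ∈ S) : s ∈ idealGen k S :=
  Submodule.subset_span ⟨1, 1, s, hs, by simp⟩

theorem idealGen_mul_left (S : Set F) (r : F) {m : F} (hm : m ∈ idealGen k S) :
    r * m ∈ idealGen k S := by
  induction hm using Submodule.span_induction with
  | mem z hz =>
      obtain ⟨u, v, s, hs, rfl⟩ := hz
      exact Submodule.subset_span ⟨r * u, v, s, hs, by noncomm_ring⟩
  | zero => simp
  | add a b _ _ ha hb => rw [mul_add]; exact Submodule.add_mem _ ha hb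
  | smul c a _ ha => rw [mul_smul_comm]; exact Submodule.smul_mem _ c ha

theorem idealGen_mul_right (S : Set F) (r : F) {m : F} (hm : m ∈ idealGen k S) :
    m * r ∈ idealGen k S := by
  induction hm using Submodule.span_induction with
  | mem z hz =>
      obtain ⟨u, v, s, hs, rfl⟩ := hz
      exact Submodule.subset_span ⟨u, v * r, s, hs, by noncomm_ring⟩
  | zero => simp
  | add a b _ _ ha hb => rw [add_mul]; exact Submodule.add_mem _ ha hb
  | smul c a _ ha => rw [smul_mul_assoc]; exact Submodule.smul_mem _ c ha

end Aux

/-- For every `i` and every homogeneous `f ∈ R`, the element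
`y_i f - (-1)^{|x_i||f|} f y_i - {x_i, f}` of `F(R)` lies in the ideal `J`. -/
theorem stmt5 (k R F : Type) [Field k] [Ring R] [Algebra k R] [Ring F] [Algebra k F]
    (n : ℕ) (𝒜 : ℤ → Submodule k R) [GradedAlgebra 𝒜]
    (ℱ : ℤ → Submodule k F) [GradedAlgebra ℱ]
    (P : DGPoissonAlgebra k R 𝒜)
    (x : Fin n → R) (w : Fin n → ℤ) (hx : ∀ i, x i ∈ 𝒜 (w i))
    (hgen : Algebra.adjoin k (Set.range x) = ⊤)
    (ψ : Fin n → R →ₗ[k] R)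
    (hψx : ∀ i, ψ i (x i) = 1) (hψx' : ∀ i j, i ≠ j → ψ i (x j) = 0)
    (hψmem : ∀ (r : Fin n) ⦃i : ℤ⦄ ⦃a : R⦄, a ∈ 𝒜 i → ψ r a ∈ 𝒜 (i - w r))
    (hψmul : ∀ (r : Fin n) ⦃i j : ℤ⦄ ⦃a b : R⦄, a ∈ 𝒜 i → b ∈ 𝒜 j →
      ψ r (a * b) = a * ψ r b + sgn (i * j) • (b * ψ r a))
    (ι : R →ₐ[k] F) (hι : ∀ ⦃i : ℤ⦄ ⦃a : R⦄, a ∈ 𝒜 i → ι a ∈ ℱ i)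
    (y : Fin n → F) (hy : ∀ i, y i ∈ ℱ (w i))
    (I : Submodule k R) (hI : IsDGPoissonIdeal k 𝒜 P I) :
    ∀ (i : Fin n) ⦃l : ℤ⦄ ⦃f : R⦄, f ∈ 𝒜 l →
      y i * ι f - sgn (w i * l) • (ι f * y i) - ι (P.br (x i) f)
        ∈ idealGen k (Jgens 𝒜 P x w ι ψ y I) := by
  classical
  intro i
  set J := idealGen k (Jgens 𝒜 P x w ι ψ y I) with hJ
  -- the linear map  f ↦ y i * ι f - sgn (w i * l) • (ι f * y i) - ι {x i, f}
  set L : ℤ → R →ₗ[k] F := fun l =>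
    (LinearMap.mulLeft k (y i)).comp ι.toLinearMap
      - sgn (w i * l) • ((LinearMap.mulRight k (y i)).comp ι.toLinearMap)
      - ι.toLinearMap.comp (P.br (x i)) with hL
  have hLapp : ∀ (l : ℤ) (f : R),
      L l f = y i * ι f - sgn (w i * l) • (ι f * y i) - ι (P.br (x i) f) := by
    intro l f
    simp [hL, LinearMap.sub_apply, LinearMap.smul_apply, LinearMap.mulLeft_apply,
      LinearMap.mulRight_apply]
  have h1A : (1 : R) ∈ 𝒜 0 := SetLike.one_mem_graded 𝒜
  have hbr1 : P.br (x i) 1 = 0 := by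
    have h := P.leibniz (hx i) h1A h1A
    rw [mul_one, mul_one, one_mul, mul_zero, sgn_zero, one_smul] at h
    exact left_eq_add.mp h
  -- key multiplicative step
  have key : ∀ (p q : ℤ) (a b : R), a ∈ 𝒜 p → b ∈ 𝒜 q →
      L p a ∈ J → L q b ∈ J → L (p + q) (a * b) ∈ J := by
    intro p q a b hap hbq hLa hLb
    have hid : L (p + q) (a * b)
        = L p a * ι b + sgn (w i * p) • (ι a * L q b) := by
      rw [hLapp, hLapp, hLapp, map_mul, P.leibniz (hx i) hap hbq, map_add,
        map_zsmul, map_mul, map_mul, mul_add, sgn_add]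
      simp only [sub_mul, mul_sub, smul_sub, smul_mul_assoc, mul_smul_comm,
        smul_smul, mul_assoc]
      module
    rw [hid]
    exact Submodule.add_mem _ (idealGen_mul_right _ _ hLa)
      (zsmul_mem (idealGen_mul_left _ _ hLb) _)
  -- every decomposition component lies in the right preimage
  have main : ∀ f ∈ Algebra.adjoin k (Set.range x), ∀ l : ℤ,
      L l ((DirectSum.decompose 𝒜 f l : R)) ∈ J := by
    intro f hf
    induction hf using Algebra.adjoin_induction with
    | mem z hz =>
        obtain ⟨j, rfl⟩ := hz
        intro l
        by_cases hlw : l = w j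
        · subst hlw
          rw [DirectSum.decompose_of_mem_same 𝒜 (hx j), hLapp]
          exact mem_idealGen_of_mem (Or.inr ⟨i, j, rfl⟩)
        · rw [DirectSum.decompose_of_mem_ne 𝒜 (hx j) (Ne.symm hlw), map_zero]
          exact Submodule.zero_mem _
    | algebraMap c =>
        intro l
        have hc0 : (algebraMap k R) c ∈ 𝒜 0 := by
          have := Submodule.smul_mem (𝒜 0) c h1A
          rwa [Algebra.smul_def, mul_one] at this
        by_cases hl0 : l = 0
        · subst hl0
          rw [DirectSum.decompose_of_mem_same 𝒜 hc0]
          have hL1 : L 0 ((algebraMap k R) c) = 0 := by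
            rw [hLapp]
            have : P.br (x i) ((algebraMap k R) c) = 0 := by
              have : (algebraMap k R) c = c • (1 : R) := by
                rw [Algebra.smul_def, mul_one]
              rw [this, map_smul, hbr1, smul_zero]
            rw [this, map_zero, sub_zero, mul_zero, sgn_zero, one_smul,
              AlgHom.commutes, Algebra.commutes, sub_self]
          rw [hL1]; exact Submodule.zero_mem _
        · rw [DirectSum.decompose_of_mem_ne 𝒜 hc0 (Ne.symm hl0), map_zero]
          exact Submodule.zero_mem _
    | add a b ha hb iha ihb =>
        intro l
        have hdec : ((DirectSum.decompose 𝒜 (a + b) l : R))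
            = (DirectSum.decompose 𝒜 a l : R) + (DirectSum.decompose 𝒜 b l : R) := by
          rw [DirectSum.decompose_add, DirectSum.add_apply, Submodule.coe_add]
        rw [hdec, map_add]
        exact Submodule.add_mem _ (iha l) (ihb l)
    | mul a b ha hb iha ihb =>
        intro l
        rw [DirectSum.decompose_mul]
        rw [DirectSum.coe_mul_apply 𝒜]
        rw [map_sum]
        refine Submodule.sum_mem _ ?_
        intro ij hij
        rw [Finset.mem_filter] at hij
        have hsum : ij.1 + ij.2 = l := hij.2
        rw [← hsum]
        exact key ij.1 ij.2 _ _ (SetLike.coe_mem _) (SetLike.coe_mem _)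
          (iha ij.1) (ihb ij.2)
  intro l f hf
  have hfadj : f ∈ Algebra.adjoin k (Set.range x) := by rw [hgen]; trivial
  have := main f hfadj l
  rw [DirectSum.decompose_of_mem_same 𝒜 hf, hLapp] at this
  exact this
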